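/- Let S be a finite nonempty set of points in the plane ℝ² and let p ∈ ℝ² be a point with p ∉ convexHull(S). Then there exists a point v ∈ S such that every point of S lies in the closed half-plane on one fixed side of the line through p and v; concretely, there exists v ∈ S such that for all x ∈ S, det(v − p, x − p) ≥ 0, where det(u, w) = u.x·w.y − u.y·w.x. -/

import Mathlib

/-!
Separate `p` from the convex hull of `S` by a linear functional `⟪n, ·⟫`, so that every
`x - p` with `x ∈ S` lies in the open half-plane `⟪n, ·⟫ > 0`. Inside that half-plane the
directions are ordered by the slope `cross n w / ⟪n, w⟫`, and the point of least slope is a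
tangent point: the Lagrange-type identity
`⟪n, n⟫ * cross v w = ⟪n, v⟫ * cross n w - cross n v * ⟪n, w⟫` turns the slope comparison into
`cross (v - p) (x - p) ≥ 0`.
-/

open RealInnerProductSpace

theorem exists_inner_lt_of_notMem_convexHull {E : Type*} [NormedAddCommGroup E]
    [InnerProductSpace ℝ E] [CompleteSpace E] {s : Set E} (hs : s.Finite) {p : E}
    (hp : p ∉ convexHull ℝ s) : ∃ n : E, ∀ x ∈ s, ⟪n, p⟫ < ⟪n, x⟫ := by
  obtain ⟨f, c, hfp, hfs⟩ := geometric_hahn_banach_point_closed (convex_convexHull ℝ s)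
    (hs.isCompact_convexHull ℝ).isClosed hp
  refine ⟨(InnerProductSpace.toDual ℝ E).symm f, fun x hx => ?_⟩
  simp only [InnerProductSpace.toDual_symm_apply]
  exact hfp.trans (hfs x (subset_convexHull ℝ s hx))

namespace EuclideanSpace

def cross (u w : EuclideanSpace ℝ (Fin 2)) : ℝ := u 0 * w 1 - u 1 * w 0

theorem inner_self_mul_cross (n v w : EuclideanSpace ℝ (Fin 2)) :
    ⟪n, n⟫ * cross v w = ⟪n, v⟫ * cross n w - cross n v * ⟪n, w⟫ := by
  simp only [cross, PiLp.inner_apply, Fin.sum_univ_two, RCLike.inner_apply, conj_trivial]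
  ring

theorem exists_forall_cross_nonneg_of_inner_pos {ι : Type*} {s : Finset ι} (hs : s.Nonempty)
    (w : ι → EuclideanSpace ℝ (Fin 2)) {n : EuclideanSpace ℝ (Fin 2)}
    (hn : ∀ i ∈ s, 0 < ⟪n, w i⟫) : ∃ j ∈ s, ∀ i ∈ s, 0 ≤ cross (w j) (w i) := by
  obtain ⟨j, hj, hmin⟩ := s.exists_min_image (fun i => cross n (w i) / ⟪n, w i⟫) hs
  refine ⟨j, hj, fun i hi => ?_⟩
  have hn0 : 0 < ⟪n, n⟫ := by
    refine real_inner_self_pos.mpr fun h => ?_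
    simpa [h] using hn j hj
  have hslope : cross n (w j) * ⟪n, w i⟫ ≤ cross n (w i) * ⟪n, w j⟫ :=
    (div_le_div_iff₀ (hn j hj) (hn i hi)).mp (hmin i hi)
  rw [← mul_nonneg_iff_of_pos_left hn0, inner_self_mul_cross]
  linarith

end EuclideanSpace

theorem exists_tangent_point_of_not_mem_convexHull
    (S : Finset (EuclideanSpace ℝ (Fin 2))) (hS : S.Nonempty)
    (p : EuclideanSpace ℝ (Fin 2))
    (hp : p ∉ convexHull ℝ (S : Set (EuclideanSpace ℝ (Fin 2)))) :
    ∃ v ∈ S, ∀ x ∈ S,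
      (v 0 - p 0) * (x 1 - p 1) - (v 1 - p 1) * (x 0 - p 0) ≥ 0 := by
  obtain ⟨n, hn⟩ := exists_inner_lt_of_notMem_convexHull S.finite_toSet hp
  have hpos : ∀ x ∈ S, 0 < ⟪n, x - p⟫ := fun x hx => by
    simpa [inner_sub_right] using hn x hx
  obtain ⟨v, hv, hvx⟩ := EuclideanSpace.exists_forall_cross_nonneg_of_inner_pos hS (· - p) hpos
  exact ⟨v, hv, fun x hx => by simpa [EuclideanSpace.cross] using hvx x hx⟩
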